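/- Let n ∈ ℕ and let W = {w_1, …, w_n}, M = {m_1, …, m_n}, W' = {w'_1, …, w'_n}, M' = {m'_1, …, m'_n} be pairwise disjoint sets; write w = w_1 and m' = m'_1. Given a profile P_W of partial preference lists for W over M and a profile P_M for M over W, define full preference lists on W ∪ W' over M ∪ M': the list of w_i is her list in P_W, followed by m'_i, followed by all remaining men sorted by index; the list of w'_i is m_i followed by all remaining men sorted by index; symmetrically, the list of m_j is his list in P_M, followed by w'_j, followed by all remaining women sorted by index; the list of m'_j is w_j followed by all remaining women sorted by index. Then the following are equivalent: (i) w is single in some marriage between W and M that is stable with respect to P_W and P_M; (ii) w and m' are married to each other in some perfect marriage between W ∪ W' and M ∪ M' that is stable with respect to the constructed full preference lists; (iii) w and m' are married to each other in every perfect marriage between W ∪ W' and M ∪ M' that is stable with respect to the constructed full preference lists. -/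

import Mathlib

/-- `listPref l a b`: in the (possibly partial) preference list `l`
(most-preferred first), `a` is preferred over `b`: `a` is on the list, and
either `b` is not on the list or `a` precedes `b` on it. -/
def listPref {α : Type} [DecidableEq α] (l : List α) (a b : α) : Prop :=
  a ∈ l ∧ (b ∈ l → l.idxOf a < l.idxOf b)

/-- A marriage between (a subset of) the women `Fin nw` and (a subset of) the
men `Fin nm`: `μ i = some j` means woman `i` is married to man `j`, and
`μ i = none` means woman `i` is single; no two women share a husband. -/
def IsMarriage {nw nm : ℕ} (μ : Fin nw → Option (Fin nm)) : Prop :=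
  ∀ i i' j, μ i = some j → μ i' = some j → i = i'

/-- Stability of a marriage `μ` with respect to (possibly partial) preference
lists `wL` (women's lists of men) and `mL` (men's lists of women): every married
participant is married to someone on their own list, and there is no blocking
pair, i.e. no pair `(i, j)`, with `j` on `i`'s list and `i` on `j`'s list, such
that woman `i` is single or prefers `j` over her spouse, and man `j` is single
or prefers `i` over his spouse. -/
def StableL {nw nm : ℕ} (wL : Fin nw → List (Fin nm)) (mL : Fin nm → List (Fin nw))
    (μ : Fin nw → Option (Fin nm)) : Prop :=
  (∀ i j, μ i = some j → j ∈ wL i ∧ i ∈ mL j) ∧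
  ¬∃ (i : Fin nw) (j : Fin nm),
      j ∈ wL i ∧ i ∈ mL j ∧
      (∀ j', μ i = some j' → listPref (wL i) j j') ∧
      (∀ i', μ i' = some j → listPref (mL j) i i')

/-- Append to the list `l` all the remaining elements of `Fin N`, sorted by index. -/
def completeL {N : ℕ} (l : List (Fin N)) : List (Fin N) :=
  l ++ (List.finRange N).filter (fun a => !(l.contains a))

/-- Extension of a profile `L` of partial preference lists on `Fin n` to a profile
of full preference lists on `Fin (n + n)`.  On each side, participant `i < n` is
an original participant (`w_{i+1}` resp. `m_{j+1}`) and participant `n + i` is a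
primed participant (`w'_{i+1}` resp. `m'_{j+1}`).  The full list of `w_i` is her
original list (in the same order), then `m'_i`, then all remaining men sorted by
index; the full list of `w'_i` is `m_i` followed by all remaining men sorted by
index.  The men's lists are extended by the same construction. -/
def extL (n : ℕ) (L : Fin n → List (Fin n)) : Fin (n + n) → List (Fin (n + n)) :=
  fun i =>
    if h : i.val < n then
      completeL (((L ⟨i.val, h⟩).map (Fin.castAdd n)) ++ [Fin.natAdd n ⟨i.val, h⟩])
    else
      completeL [Fin.castAdd n ⟨i.val - n, by have := i.isLt; omega⟩]

/-!
Restricting a stable marriage of the extended instance to `W ∪ M` gives a stable marriage of the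
original instance, because `w_i` ranks `m'_i` right after her original list while `m'_i` ranks
`w_i` first (and symmetrically for `m_j` and `w'_j`); an original woman left single by the
restriction is therefore married to her own `m'_i`. By the rural hospitals theorem a woman is
single in all stable marriages or in none, which gives (i) ⇒ (iii). The Gale–Shapley algorithm
yields a stable marriage of the extended instance, which is perfect because all its lists are
full; this gives (iii) ⇒ (ii), and (ii) ⇒ (i) is the restriction again.
-/

open Function Fin

section ListPref
variable {α : Type} [DecidableEq α] {l l₁ l₂ : List α} {a b c : α}

lemma listPref_of_mem_of_not_mem (ha : a ∈ l) (hb : b ∉ l) : listPref l a b :=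
  ⟨ha, fun hb' => absurd hb' hb⟩

lemma listPref.asymm (h : listPref l a b) : ¬listPref l b a :=
  fun h' => lt_asymm (h.2 h'.1) (h'.2 h.1)

lemma listPref_irrefl (l : List α) (a : α) : ¬listPref l a a :=
  fun h => h.asymm h

lemma listPref.trans (hab : listPref l a b) (hbc : listPref l b c) : listPref l a c :=
  ⟨hab.1, fun hc => (hab.2 hbc.1).trans (hbc.2 hc)⟩

lemma listPref_or_listPref (ha : a ∈ l) (hab : a ≠ b) : listPref l a b ∨ listPref l b a := by
  by_cases hb : b ∈ l
  · have hidx : l.idxOf a ≠ l.idxOf b := fun h => hab ((List.idxOf_inj ha).1 h)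
    rcases hidx.lt_or_gt with h | h
    · exact .inl ⟨ha, fun _ => h⟩
    · exact .inr ⟨hb, fun _ => h⟩
  · exact .inl (listPref_of_mem_of_not_mem ha hb)

lemma listPref_of_not_listPref (ha : a ∈ l) (hab : a ≠ b) (h : ¬listPref l a b) :
    listPref l b a :=
  (listPref_or_listPref ha hab).resolve_left h

lemma listPref_append_of_mem (ha : a ∈ l₁) : listPref (l₁ ++ l₂) a b ↔ listPref l₁ a b := by
  by_cases hb : b ∈ l₁
  · simp [listPref, ha, hb, List.idxOf_append_of_mem]
  · refine iff_of_true ⟨List.mem_append_left _ ha, fun _ => ?_⟩ (listPref_of_mem_of_not_mem ha hb)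
    rw [List.idxOf_append_of_mem ha, List.idxOf_append_of_notMem hb]
    exact (List.idxOf_lt_length_iff.2 ha).trans_le (Nat.le_add_right _ _)

lemma List.idxOf_map_of_injective {β : Type} [DecidableEq β] {f : α → β} (hf : Injective f)
    (l : List α) (a : α) : (l.map f).idxOf (f a) = l.idxOf a := by
  simp only [List.idxOf, List.findIdx_map, comp_def]
  congr 1
  funext x
  simp [hf.eq_iff]

lemma listPref_map {β : Type} [DecidableEq β] {f : α → β} (hf : Injective f) :
    listPref (l.map f) (f a) (f b) ↔ listPref l a b := by
  simp only [listPref, List.mem_map_of_injective hf, List.idxOf_map_of_injective hf]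

end ListPref

section CompleteL
variable {N : ℕ} {l : List (Fin N)}

lemma mem_completeL (l : List (Fin N)) (a : Fin N) : a ∈ completeL l := by
  by_cases h : a ∈ l
  · exact List.mem_append_left _ h
  · exact List.mem_append_right _ (by simp [h])

lemma List.Nodup.completeL (h : l.Nodup) : (completeL l).Nodup :=
  h.append ((List.nodup_finRange N).filter _) fun a ha hb => by simp_all

lemma listPref_completeL_of_mem {a : Fin N} (ha : a ∈ l) (b : Fin N) :
    listPref (completeL l) a b ↔ listPref l a b :=
  listPref_append_of_mem ha

end CompleteL

section Stability
variable {nw nm : ℕ} {wL : Fin nw → List (Fin nm)} {mL : Fin nm → List (Fin nw)}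
  {μ μ' : Fin nw → Option (Fin nm)} {i : Fin nw} {j : Fin nm}

lemma StableL.exists_rival (hs : StableL wL mL μ) (hj : j ∈ wL i) (hi : i ∈ mL j)
    (hpref : ∀ j', μ i = some j' → listPref (wL i) j j') :
    ∃ i', μ i' = some j ∧ ¬listPref (mL j) i i' := by
  by_contra! h
  exact hs.2 ⟨i, j, hj, hi, hpref, h⟩

lemma StableL.exists_partner (hs : StableL wL mL μ) (hj : j ∈ wL i) (hi : i ∈ mL j)
    (hpref : ∀ i', μ i' = some j → listPref (mL j) i i') :
    ∃ j', μ i = some j' ∧ ¬listPref (wL i) j j' := by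
  by_contra! h
  exact hs.2 ⟨i, j, hj, hi, h, hpref⟩

def PrefersMarriage (wL : Fin nw → List (Fin nm)) (μ' μ : Fin nw → Option (Fin nm))
    (i : Fin nw) : Prop :=
  ∃ j, μ' i = some j ∧ ∀ j', μ i = some j' → listPref (wL i) j j'

/-- By stability of `μ`, the husband of `i` in `μ'` is married in `μ` to a woman he prefers
over `i`; by stability of `μ'`, that woman is better off in `μ'`. -/
lemma PrefersMarriage.exists_next (hs : StableL wL mL μ) (hs' : StableL wL mL μ')
    (hμ' : IsMarriage μ') (h : PrefersMarriage wL μ' μ i) :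
    ∃ i'', PrefersMarriage wL μ' μ i'' ∧ ∃ j, μ' i = some j ∧ μ i'' = some j := by
  obtain ⟨j, hj, hpref⟩ := h
  obtain ⟨hjw, him⟩ := hs'.1 i j hj
  obtain ⟨i'', hi'', hnot⟩ := hs.exists_rival hjw him hpref
  have hne : i ≠ i'' := by
    rintro rfl
    exact listPref_irrefl _ _ (hpref j hi'')
  have hpref'' : listPref (mL j) i'' i := listPref_of_not_listPref him hne hnot
  obtain ⟨hjw'', him''⟩ := hs.1 i'' j hi''
  obtain ⟨j'', hj'', hnot''⟩ := hs'.exists_partner hjw'' him'' fun i' hi' => by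
    obtain rfl := hμ' _ _ _ hi' hj
    exact hpref''
  have hne' : j ≠ j'' := by
    rintro rfl
    exact hne (hμ' _ _ _ hj hj'')
  refine ⟨i'', ⟨j'', hj'', fun j' hj' => ?_⟩, j, hj, hi''⟩
  obtain rfl : j = j' := Option.some_inj.1 (hi''.symm.trans hj')
  exact listPref_of_not_listPref hjw'' hne' hnot''

/-- Rural hospitals theorem. The map `μ⁻¹ ∘ μ'` sends the women better off in `μ'` injectively
into themselves, so it is onto; but a woman single in `μ` is not in the range of `μ⁻¹`. -/
theorem StableL.eq_none_of_eq_none (hs : StableL wL mL μ) (hs' : StableL wL mL μ')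
    (hμ' : IsMarriage μ') (h₀ : μ i = none) : μ' i = none := by
  by_contra! hsome
  obtain ⟨j₀, hj₀⟩ := Option.ne_none_iff_exists'.1 hsome
  choose g hg hgj using fun w : {i // PrefersMarriage wL μ' μ i} => w.2.exists_next hs hs' hμ'
  let G : {i // PrefersMarriage wL μ' μ i} → {i // PrefersMarriage wL μ' μ i} :=
    fun w => ⟨g w, hg w⟩
  have hG : Injective G := by
    intro w₁ w₂ h
    obtain ⟨j₁, h₁, h₁'⟩ := hgj w₁
    obtain ⟨j₂, h₂, h₂'⟩ := hgj w₂
    have hg₁₂ : g w₁ = g w₂ := congrArg Subtype.val h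
    rw [hg₁₂, h₂'] at h₁'
    obtain rfl : j₂ = j₁ := Option.some_inj.1 h₁'
    exact Subtype.ext (hμ' _ _ _ h₁ h₂)
  obtain ⟨w, hw⟩ := Finite.injective_iff_surjective.1 hG ⟨i, j₀, hj₀, by simp [h₀]⟩
  obtain ⟨j, -, hj⟩ := hgj w
  have hgw : g w = i := congrArg Subtype.val hw
  rw [hgw, h₀] at hj
  cases hj

end Stability

namespace GaleShapley
variable {nw nm : ℕ} (wL : Fin nw → List (Fin nm)) (mL : Fin nm → List (Fin nw))

/-- In state `s`, woman `i` has made `s i` proposals so far and is proposing to the next man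
on her list, if any. -/
def proposal (s : Fin nw → ℕ) (i : Fin nw) : Option (Fin nm) :=
  (wL i)[s i]?

def Outbid (s : Fin nw → ℕ) (j : Fin nm) (i : Fin nw) : Prop :=
  ∃ i', proposal wL s i' = some j ∧ listPref (mL j) i' i

def Rejects (s : Fin nw → ℕ) (j : Fin nm) (i : Fin nw) : Prop :=
  proposal wL s i = some j ∧ (i ∉ mL j ∨ Outbid wL mL s j i)

/-- Every man a woman has passed over would still reject her. -/
def Invariant (s : Fin nw → ℕ) : Prop :=
  ∀ i j, j ∈ wL i → (wL i).idxOf j < s i → i ∉ mL j ∨ Outbid wL mL s j i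

variable {wL mL} {s : Fin nw → ℕ} {i : Fin nw} {j : Fin nm}

lemma proposal_update_of_ne {i' : Fin nw} (h : i' ≠ i) (k : ℕ) :
    proposal wL (update s i k) i' = proposal wL s i' := by
  simp only [proposal, update_of_ne h]

lemma idxOf_of_proposal_eq_some (hw : (wL i).Nodup) (h : proposal wL s i = some j) :
    (wL i).idxOf j = s i := by
  obtain ⟨hlt, rfl⟩ := List.getElem?_eq_some_iff.1 h
  exact hw.idxOf_getElem _ _

lemma Outbid.update (hr : Rejects wL mL s j i) {a : Fin nw} {b : Fin nm}
    (h : Outbid wL mL s b a) : Outbid wL mL (update s i (s i + 1)) b a := by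
  obtain ⟨i₀, hi₀, hpref⟩ := h
  by_cases h₀ : i₀ = i
  · subst h₀
    obtain rfl : j = b := Option.some_inj.1 (hr.1.symm.trans hi₀)
    obtain ⟨i', hi', hpref'⟩ := hr.2.resolve_left (not_not_intro hpref.1)
    have hne : i' ≠ i₀ := by
      rintro rfl
      exact listPref_irrefl _ _ hpref'
    exact ⟨i', (proposal_update_of_ne hne _).trans hi', hpref'.trans hpref⟩
  · exact ⟨i₀, (proposal_update_of_ne h₀ _).trans hi₀, hpref⟩

lemma Invariant.update (hw : (wL i).Nodup) (hs : Invariant wL mL s) (hr : Rejects wL mL s j i) :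
    Invariant wL mL (update s i (s i + 1)) := by
  intro a b hb hlt
  by_cases hold : (wL a).idxOf b < s a
  · exact (hs a b hb hold).imp_right (Outbid.update hr)
  obtain rfl : a = i := by
    by_contra hne
    rw [update_of_ne hne] at hlt
    exact hold hlt
  rw [update_self] at hlt
  obtain rfl : b = j :=
    (List.idxOf_inj hb).1 (by rw [idxOf_of_proposal_eq_some hw hr.1]; omega)
  exact hr.2.imp_right (Outbid.update hr)

theorem exists_invariant_forall_not_rejects (hw : ∀ i, (wL i).Nodup) (s : Fin nw → ℕ)
    (hs : Invariant wL mL s) : ∃ s', Invariant wL mL s' ∧ ∀ i j, ¬Rejects wL mL s' j i := by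
  induction hk : ∑ i, ((wL i).length - s i) using Nat.strong_induction_on generalizing s with
  | _ k ih =>
    by_cases hr : ∃ i j, Rejects wL mL s j i
    · obtain ⟨i, j, hr⟩ := hr
      have hi : s i < (wL i).length := (List.getElem?_eq_some_iff.1 hr.1).1
      have hdec : ∑ i', ((wL i').length - update s i (s i + 1) i') < k := by
        rw [← hk]
        refine Finset.sum_lt_sum (fun i' _ => ?_) ⟨i, Finset.mem_univ _, ?_⟩
        · rcases eq_or_ne i' i with rfl | hne
          · rw [update_self]; omega
          · rw [update_of_ne hne]
        · rw [update_self]; omega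
      exact ih _ hdec _ (hs.update (hw i) hr) rfl
    · simp only [not_exists] at hr
      exact ⟨s, hs, hr⟩

lemma isMarriage_proposal (hr : ∀ i j, ¬Rejects wL mL s j i) : IsMarriage (proposal wL s) := by
  intro i i' j h h'
  by_contra hne
  have acceptable : ∀ {a}, proposal wL s a = some j → a ∈ mL j :=
    fun ha => not_not.1 fun hna => hr _ j ⟨ha, .inl hna⟩
  rcases listPref_or_listPref (acceptable h) hne with hpref | hpref
  · exact hr i' j ⟨h', .inr ⟨i, h, hpref⟩⟩
  · exact hr i j ⟨h, .inr ⟨i', h', hpref⟩⟩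

lemma stableL_proposal (hw : ∀ i, (wL i).Nodup) (hs : Invariant wL mL s)
    (hr : ∀ i j, ¬Rejects wL mL s j i) : StableL wL mL (proposal wL s) := by
  refine ⟨fun i j h => ⟨?_, not_not.1 fun hna => hr i j ⟨h, .inl hna⟩⟩, ?_⟩
  · obtain ⟨hlt, rfl⟩ := List.getElem?_eq_some_iff.1 h
    exact List.getElem_mem hlt
  rintro ⟨i, j, hjw, him, hwpref, hmpref⟩
  rcases lt_or_ge ((wL i).idxOf j) (s i) with hlt | hge
  · obtain ⟨i', hi', hpref⟩ := (hs i j hjw hlt).resolve_left (not_not_intro him)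
    exact hpref.asymm (hmpref i' hi')
  · have hlt : s i < (wL i).length := hge.trans_lt (List.idxOf_lt_length_iff.2 hjw)
    have hprop : proposal wL s i = some (wL i)[s i] := List.getElem?_eq_getElem hlt
    have := (hwpref _ hprop).2 (List.getElem_mem hlt)
    rw [(hw i).idxOf_getElem] at this
    omega

end GaleShapley

open GaleShapley in
theorem exists_isMarriage_stableL {nw nm : ℕ} (wL : Fin nw → List (Fin nm))
    (mL : Fin nm → List (Fin nw)) (hw : ∀ i, (wL i).Nodup) :
    ∃ μ, IsMarriage μ ∧ StableL wL mL μ := by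
  obtain ⟨s, hs, hr⟩ := exists_invariant_forall_not_rejects (mL := mL) hw (fun _ => 0)
    fun _ _ _ h => absurd h (Nat.not_lt_zero _)
  exact ⟨proposal wL s, isMarriage_proposal hr, stableL_proposal hw hs hr⟩

section Perfect
variable {N : ℕ} {μ : Fin N → Option (Fin N)}

lemma forall_isSome_of_forall_exists (h : ∀ j, ∃ i, μ i = some j) : ∀ i, (μ i).isSome := by
  choose f hf using h
  have hf_inj : Injective f := fun a b hab => Option.some_inj.1 ((hf a).symm.trans (hab ▸ hf b))
  intro i
  obtain ⟨j, rfl⟩ := Finite.injective_iff_surjective.1 hf_inj i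
  simp [hf j]

lemma IsMarriage.forall_exists_of_forall_isSome (hμ : IsMarriage μ) (h : ∀ i, (μ i).isSome) :
    ∀ j, ∃ i, μ i = some j := by
  have hg : Injective fun i => (μ i).get (h i) := fun a b hab =>
    hμ a b _ (Option.some_get _).symm (by simp only at hab; rw [hab, Option.some_get])
  intro j
  obtain ⟨i, hi⟩ := Finite.injective_iff_surjective.1 hg j
  exact ⟨i, hi ▸ (Option.some_get _).symm⟩

/-- With full lists, a single woman and a single man would form a blocking pair. -/
lemma StableL.perfect {wL mL : Fin N → List (Fin N)} (hfw : ∀ i j, j ∈ wL i)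
    (hfm : ∀ j i, i ∈ mL j) (hμ : IsMarriage μ) (hs : StableL wL mL μ) :
    (∀ i, (μ i).isSome) ∧ ∀ j, ∃ i, μ i = some j := by
  have hall : ∀ i, (μ i).isSome := by
    intro i
    by_contra hi
    rw [Option.not_isSome_iff_eq_none] at hi
    have hmen : ∀ j, ∃ i, μ i = some j := by
      intro j
      by_contra! hj
      exact hs.2 ⟨i, j, hfw i j, hfm j i, by simp [hi], fun i' h => absurd h (hj i')⟩
    simpa [hi] using forall_isSome_of_forall_exists hmen i
  exact ⟨hall, hμ.forall_exists_of_forall_isSome hall⟩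

end Perfect

section Extension
variable {n : ℕ} (L : Fin n → List (Fin n))

lemma castAdd_ne_natAdd (i j : Fin n) : castAdd n i ≠ natAdd n j := by
  simp only [ne_eq, Fin.ext_iff, val_castAdd, val_natAdd]
  omega

lemma extL_castAdd (i : Fin n) :
    extL n L (castAdd n i) = completeL ((L i).map (castAdd n) ++ [natAdd n i]) := by
  simp [extL]

lemma extL_natAdd (i : Fin n) : extL n L (natAdd n i) = completeL [castAdd n i] := by
  simp [extL]

lemma mem_extL (x a : Fin (n + n)) : a ∈ extL n L x := by
  unfold extL
  split <;> exact mem_completeL _ _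

lemma nodup_extL (hL : ∀ i, (L i).Nodup) (x : Fin (n + n)) : (extL n L x).Nodup := by
  induction x using Fin.addCases with
  | left i =>
    rw [extL_castAdd]
    refine List.Nodup.completeL (((hL i).map (castAdd_injective n n)).append
      (List.nodup_singleton _) ?_)
    simp only [List.disjoint_singleton, List.mem_map, not_exists, not_and]
    exact fun c _ => castAdd_ne_natAdd c i
  | right i =>
    rw [extL_natAdd]
    exact (List.nodup_singleton _).completeL

end Extension

section ExtendedPreferences
variable {n : ℕ} {L : Fin n → List (Fin n)} {i j : Fin n}

lemma listPref_extL_castAdd_castAdd (hj : j ∈ L i) (j' : Fin n) :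
    listPref (extL n L (castAdd n i)) (castAdd n j) (castAdd n j') ↔ listPref (L i) j j' := by
  have hmem : castAdd n j ∈ (L i).map (castAdd n) := List.mem_map_of_mem hj
  rw [extL_castAdd, listPref_completeL_of_mem (List.mem_append_left _ hmem),
    listPref_append_of_mem hmem, listPref_map (castAdd_injective n n)]

lemma listPref_extL_castAdd_natAdd (hj : j ∈ L i) (c : Fin n) :
    listPref (extL n L (castAdd n i)) (castAdd n j) (natAdd n c) := by
  have hmem : castAdd n j ∈ (L i).map (castAdd n) := List.mem_map_of_mem hj
  rw [extL_castAdd, listPref_completeL_of_mem (List.mem_append_left _ hmem),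
    listPref_append_of_mem hmem]
  refine listPref_of_mem_of_not_mem hmem ?_
  simp only [List.mem_map, not_exists, not_and]
  exact fun c' _ => castAdd_ne_natAdd c' c

lemma listPref_extL_castAdd_natAdd_self {y : Fin (n + n)}
    (hy : y ∉ (L i).map (castAdd n) ++ [natAdd n i]) :
    listPref (extL n L (castAdd n i)) (natAdd n i) y := by
  have hmem : natAdd n i ∈ (L i).map (castAdd n) ++ [natAdd n i] :=
    List.mem_append_right _ (List.mem_singleton_self _)
  rw [extL_castAdd, listPref_completeL_of_mem hmem]
  exact listPref_of_mem_of_not_mem hmem hy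

lemma listPref_extL_natAdd {y : Fin (n + n)} (hy : y ≠ castAdd n i) :
    listPref (extL n L (natAdd n i)) (castAdd n i) y := by
  rw [extL_natAdd, listPref_completeL_of_mem (List.mem_singleton_self _)]
  exact listPref_of_mem_of_not_mem (List.mem_singleton_self _) (by simpa using hy)

end ExtendedPreferences

section Restriction
variable {n : ℕ} {wL mL : Fin n → List (Fin n)} {μ : Fin (n + n) → Option (Fin (n + n))}
  {i j : Fin n}

/-- `w_i` ranks `m'_i` right after her original list, and `m'_i` ranks `w_i` first. -/
lemma StableL.extL_castAdd_mem (hs : StableL (extL n wL) (extL n mL) μ) {y : Fin (n + n)}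
    (h : μ (castAdd n i) = some y) : y ∈ (wL i).map (castAdd n) ++ [natAdd n i] := by
  by_contra hy
  refine hs.2 ⟨castAdd n i, natAdd n i, mem_extL _ _ _, mem_extL _ _ _, fun y' hy' => ?_,
    fun x hx => listPref_extL_natAdd ?_⟩
  · obtain rfl := Option.some_inj.1 (h.symm.trans hy')
    exact listPref_extL_castAdd_natAdd_self hy
  · rintro rfl
    obtain rfl := Option.some_inj.1 (h.symm.trans hx)
    exact hy (List.mem_append_right _ (List.mem_singleton_self _))

lemma StableL.extL_mem_of_eq_castAdd (hμ : IsMarriage μ)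
    (hs : StableL (extL n wL) (extL n mL) μ) {x : Fin (n + n)}
    (h : μ x = some (castAdd n j)) : x ∈ (mL j).map (castAdd n) ++ [natAdd n j] := by
  by_contra hx
  refine hs.2 ⟨natAdd n j, castAdd n j, mem_extL _ _ _, mem_extL _ _ _,
    fun y hy => listPref_extL_natAdd ?_, fun x' hx' => ?_⟩
  · rintro rfl
    obtain rfl := hμ _ _ _ h hy
    exact hx (List.mem_append_right _ (List.mem_singleton_self _))
  · obtain rfl := hμ _ _ _ h hx'
    exact listPref_extL_castAdd_natAdd_self hx

lemma StableL.extL_eq_of_natAdd (hs : StableL (extL n wL) (extL n mL) μ) {c : Fin n}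
    (h : μ (castAdd n i) = some (natAdd n c)) : c = i := by
  have := hs.extL_castAdd_mem h
  simp only [List.mem_append, List.mem_map, List.mem_singleton] at this
  rcases this with ⟨j, -, hj⟩ | hc
  · exact absurd hj (castAdd_ne_natAdd j c)
  · exact natAdd_injective n n hc

lemma StableL.extL_mem_of_castAdd_castAdd (hμ : IsMarriage μ)
    (hs : StableL (extL n wL) (extL n mL) μ) (h : μ (castAdd n i) = some (castAdd n j)) :
    j ∈ wL i ∧ i ∈ mL j := by
  have hw := hs.extL_castAdd_mem h
  have hm := hs.extL_mem_of_eq_castAdd hμ h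
  simp only [List.mem_append, List.mem_map, List.mem_singleton, (castAdd_injective n n).eq_iff,
    exists_eq_right] at hw hm
  exact ⟨hw.resolve_right (castAdd_ne_natAdd j i), hm.resolve_right (castAdd_ne_natAdd i j)⟩

variable (μ) in
def restrictOriginal (i : Fin n) : Option (Fin n) :=
  (μ (castAdd n i)).bind (Fin.addCases some fun _ => none)

lemma restrictOriginal_eq_some_iff :
    restrictOriginal μ i = some j ↔ μ (castAdd n i) = some (castAdd n j) := by
  unfold restrictOriginal
  cases μ (castAdd n i) with
  | none => simp
  | some y =>
    induction y using Fin.addCases with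
    | left y => simp only [Option.bind_some, addCases_left, Option.some_inj,
        (castAdd_injective n n).eq_iff]
    | right c =>
      simp only [Option.bind_some, addCases_right, reduceCtorEq, false_iff, Option.some_inj]
      exact fun h => castAdd_ne_natAdd j c h.symm

lemma restrictOriginal_eq_none {c : Fin n} (h : μ (castAdd n i) = some (natAdd n c)) :
    restrictOriginal μ i = none := by
  rw [restrictOriginal, h, Option.bind_some, addCases_right]

lemma IsMarriage.restrictOriginal (hμ : IsMarriage μ) : IsMarriage (restrictOriginal μ) :=
  fun _ _ _ h h' => castAdd_injective n n
    (hμ _ _ _ (restrictOriginal_eq_some_iff.1 h) (restrictOriginal_eq_some_iff.1 h'))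

lemma StableL.restrictOriginal (hμ : IsMarriage μ) (hs : StableL (extL n wL) (extL n mL) μ) :
    StableL wL mL (restrictOriginal μ) := by
  refine ⟨fun i j h => hs.extL_mem_of_castAdd_castAdd hμ (restrictOriginal_eq_some_iff.1 h), ?_⟩
  rintro ⟨i, j, hjw, him, hwpref, hmpref⟩
  refine hs.2 ⟨castAdd n i, castAdd n j, mem_extL _ _ _, mem_extL _ _ _, fun y hy => ?_,
    fun x hx => ?_⟩
  · induction y using Fin.addCases with
    | left j' =>
      exact (listPref_extL_castAdd_castAdd hjw j').2
        (hwpref j' (restrictOriginal_eq_some_iff.2 hy))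
    | right c => exact listPref_extL_castAdd_natAdd hjw c
  · induction x using Fin.addCases with
    | left i' =>
      exact (listPref_extL_castAdd_castAdd him i').2
        (hmpref i' (restrictOriginal_eq_some_iff.2 hx))
    | right e => exact listPref_extL_castAdd_natAdd him e

end Restriction

theorem single_iff_married_to_prime_general (n : ℕ) (hn : 0 < n)
    (wL : Fin n → List (Fin n)) (mL : Fin n → List (Fin n))
    (hw : ∀ i, (wL i).Nodup) :
    ((∃ μ : Fin n → Option (Fin n),
        IsMarriage μ ∧ StableL wL mL μ ∧ μ ⟨0, hn⟩ = none) ↔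
      (∃ μ'' : Fin (n + n) → Option (Fin (n + n)),
        IsMarriage μ'' ∧ (∀ i, (μ'' i).isSome) ∧ (∀ j, ∃ i, μ'' i = some j) ∧
        StableL (extL n wL) (extL n mL) μ'' ∧
        μ'' (Fin.castAdd n ⟨0, hn⟩) = some (Fin.natAdd n ⟨0, hn⟩))) ∧
    ((∃ μ'' : Fin (n + n) → Option (Fin (n + n)),
        IsMarriage μ'' ∧ (∀ i, (μ'' i).isSome) ∧ (∀ j, ∃ i, μ'' i = some j) ∧
        StableL (extL n wL) (extL n mL) μ'' ∧
        μ'' (Fin.castAdd n ⟨0, hn⟩) = some (Fin.natAdd n ⟨0, hn⟩)) ↔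
      (∀ μ'' : Fin (n + n) → Option (Fin (n + n)),
        IsMarriage μ'' → (∀ i, (μ'' i).isSome) → (∀ j, ∃ i, μ'' i = some j) →
        StableL (extL n wL) (extL n mL) μ'' →
        μ'' (Fin.castAdd n ⟨0, hn⟩) = some (Fin.natAdd n ⟨0, hn⟩))) := by
  set w : Fin n := ⟨0, hn⟩
  obtain ⟨ν, hν, hνs⟩ := exists_isMarriage_stableL (extL n wL) (extL n mL) (nodup_extL wL hw)
  obtain ⟨hν_some, hν_onto⟩ := hνs.perfect (mem_extL wL) (mem_extL mL) hν
  have single_of_married : ∀ μ'', IsMarriage μ'' → StableL (extL n wL) (extL n mL) μ'' →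
      μ'' (castAdd n w) = some (natAdd n w) →
      ∃ μ, IsMarriage μ ∧ StableL wL mL μ ∧ μ w = none := fun μ'' hμ'' hs'' h =>
    ⟨restrictOriginal μ'', hμ''.restrictOriginal, hs''.restrictOriginal hμ'',
      restrictOriginal_eq_none h⟩
  have married_of_single : (∃ μ, IsMarriage μ ∧ StableL wL mL μ ∧ μ w = none) →
      ∀ μ'', IsMarriage μ'' → (∀ i, (μ'' i).isSome) → StableL (extL n wL) (extL n mL) μ'' →
      μ'' (castAdd n w) = some (natAdd n w) := by
    rintro ⟨μ, -, hs, h₀⟩ μ'' hμ'' hsome hs''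
    have hsingle : restrictOriginal μ'' w = none :=
      hs.eq_none_of_eq_none (hs''.restrictOriginal hμ'') hμ''.restrictOriginal h₀
    obtain ⟨y, hy⟩ := Option.isSome_iff_exists.1 (hsome (castAdd n w))
    induction y using Fin.addCases with
    | left j => simp [restrictOriginal_eq_some_iff.2 hy] at hsingle
    | right c => rwa [hs''.extL_eq_of_natAdd hy] at hy
  refine ⟨⟨fun h => ⟨ν, hν, hν_some, hν_onto, hνs, married_of_single h ν hν hν_some hνs⟩, ?_⟩,
    ⟨?_, fun h => ⟨ν, hν, hν_some, hν_onto, hνs, h ν hν hν_some hν_onto hνs⟩⟩⟩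
  · rintro ⟨μ'', hμ'', -, -, hs'', h⟩
    exact single_of_married μ'' hμ'' hs'' h
  · rintro ⟨μ'', hμ'', -, -, hs'', h⟩ μ₂ hμ₂ hsome₂ - hs₂
    exact married_of_single (single_of_married μ'' hμ'' hs'' h) μ₂ hμ₂ hsome₂ hs₂

/-- With `w = w_1` (index `0` among the original women) and `m' = m'_1` (index `n`
among the extended men), the following are equivalent: (i) `w` is single in some
marriage between `W` and `M` that is stable with respect to the (possibly partial,
duplicate-free) profiles `wL`, `mL`; (ii) `w` and `m'` are married to each other
in some perfect marriage between `W ∪ W'` and `M ∪ M'` that is stable with respect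
to the constructed full preference lists; (iii) `w` and `m'` are married to each
other in every such stable perfect marriage. -/
theorem single_iff_married_to_prime (n : ℕ) (hn : 0 < n)
    (wL : Fin n → List (Fin n)) (mL : Fin n → List (Fin n))
    (hw : ∀ i, (wL i).Nodup) (hm : ∀ j, (mL j).Nodup) :
    ((∃ μ : Fin n → Option (Fin n),
        IsMarriage μ ∧ StableL wL mL μ ∧ μ ⟨0, hn⟩ = none) ↔
      (∃ μ'' : Fin (n + n) → Option (Fin (n + n)),
        IsMarriage μ'' ∧ (∀ i, (μ'' i).isSome) ∧ (∀ j, ∃ i, μ'' i = some j) ∧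
        StableL (extL n wL) (extL n mL) μ'' ∧
        μ'' (Fin.castAdd n ⟨0, hn⟩) = some (Fin.natAdd n ⟨0, hn⟩))) ∧
    ((∃ μ'' : Fin (n + n) → Option (Fin (n + n)),
        IsMarriage μ'' ∧ (∀ i, (μ'' i).isSome) ∧ (∀ j, ∃ i, μ'' i = some j) ∧
        StableL (extL n wL) (extL n mL) μ'' ∧
        μ'' (Fin.castAdd n ⟨0, hn⟩) = some (Fin.natAdd n ⟨0, hn⟩)) ↔
      (∀ μ'' : Fin (n + n) → Option (Fin (n + n)),
        IsMarriage μ'' → (∀ i, (μ'' i).isSome) → (∀ j, ∃ i, μ'' i = some j) →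
        StableL (extL n wL) (extL n mL) μ'' →
        μ'' (Fin.castAdd n ⟨0, hn⟩) = some (Fin.natAdd n ⟨0, hn⟩))) :=
  single_iff_married_to_prime_general n hn wL mL hw
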